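/- arXiv:2603.21040 — 2 statements merged into one kernel-verified Lean document; each statement's English description precedes it below -/
import Mathlib

section
/- Let r_g and r be real numbers with 0 < r_g < r. Then the series Σ_{k=1}^{∞} (C_k/k)·(1 − (r_g/r)^k), with C_k = (2k choose k)/4^k, converges and its sum equals ∫_{r_g}^{r} (1/√(1 − r_g/x) − 1)/x dx. -/
/-!
By the binomial series, `1 / √(1 - ξ) - 1 = ∑_{k ≥ 1} C_k ξ ^ k` for `|ξ| < 1`: the power series
of `(1 - ξ) ^ (-a)` has coefficients `Ring.choose (a + k - 1) k`, which for `a = 1/2` satisfy the same recurrence `(k + 1) C_{k+1} = (k + 1/2) C_k` as `C_k`.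
With `ξ = r_g / x` the integrand becomes a series of nonnegative terms `C_k (r_g / x) ^ k / x`,
each integrating to `C_k / k * (1 - (r_g / r) ^ k)`. Integrating termwise only needs these
integrals to be summable, and they are bounded by `C_{k-1} / k = 2 (C_{k-1} - C_k)`, which
telescopes.
-/

open MeasureTheory Real Finset Set

noncomputable def invSqrtCoeff (k : ℕ) : ℝ := k.centralBinom / 4 ^ k

@[simp]
lemma invSqrtCoeff_zero : invSqrtCoeff 0 = 1 := by simp [invSqrtCoeff]

lemma invSqrtCoeff_nonneg (k : ℕ) : 0 ≤ invSqrtCoeff k := by unfold invSqrtCoeff; positivity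

lemma succ_mul_invSqrtCoeff_succ (k : ℕ) :
    (k + 1) * invSqrtCoeff (k + 1) = (k + 1 / 2) * invSqrtCoeff k := by
  have h : ((k + 1 : ℕ) : ℝ) * (k + 1).centralBinom = 2 * (2 * k + 1) * k.centralBinom := by
    exact_mod_cast Nat.succ_mul_centralBinom_succ k
  rw [invSqrtCoeff, invSqrtCoeff, mul_div_assoc', ← Nat.cast_succ, h]
  ring

lemma invSqrtCoeff_div_succ (k : ℕ) :
    invSqrtCoeff k / (k + 1) = 2 * (invSqrtCoeff k - invSqrtCoeff (k + 1)) := by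
  have := succ_mul_invSqrtCoeff_succ k
  rw [div_eq_iff (by positivity)]
  linear_combination 2 * this

lemma invSqrtCoeff_succ_le (k : ℕ) : invSqrtCoeff (k + 1) ≤ invSqrtCoeff k := by
  have h := invSqrtCoeff_div_succ k
  have : 0 ≤ invSqrtCoeff k / (k + 1) := by have := invSqrtCoeff_nonneg k; positivity
  linarith

lemma summable_invSqrtCoeff_div_succ : Summable fun k : ℕ => invSqrtCoeff k / (k + 1) := by
  refine summable_of_sum_range_le (c := 2) (fun k => ?_) (fun n => ?_)
  · have := invSqrtCoeff_nonneg k; positivity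
  · simp only [invSqrtCoeff_div_succ, ← mul_sum, sum_range_sub', invSqrtCoeff_zero]
    linarith [invSqrtCoeff_nonneg n]

lemma factorial_mul_invSqrtCoeff (n : ℕ) :
    n.factorial * invSqrtCoeff n = (ascPochhammer ℝ n).eval (1 / 2) := by
  induction n with
  | zero => simp
  | succ n ih =>
    rw [ascPochhammer_succ_eval, ← ih, Nat.factorial_succ, Nat.cast_mul, mul_assoc,
      mul_left_comm, Nat.cast_succ, succ_mul_invSqrtCoeff_succ]
    ring

lemma ringChoose_eq_invSqrtCoeff (n : ℕ) :
    Ring.choose ((1 / 2 : ℝ) + n - 1) n = invSqrtCoeff n := by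
  rw [← Ring.multichoose_eq]
  have h := Ring.factorial_nsmul_multichoose_eq_ascPochhammer (1 / 2 : ℝ) n
  rw [Polynomial.ascPochhammer_smeval_eq_eval, ← factorial_mul_invSqrtCoeff, nsmul_eq_mul] at h
  exact mul_left_cancel₀ (by positivity) h

lemma hasSum_invSqrtCoeff_mul_pow {ξ : ℝ} (hξ : |ξ| < 1) :
    HasSum (fun k => invSqrtCoeff k * ξ ^ k) (1 / √(1 - ξ)) := by
  have := (Real.one_div_one_sub_rpow_hasFPowerSeriesOnBall_zero (1 / 2)).hasSum
    (y := ξ) (by simpa [enorm_eq_nnnorm, ← NNReal.coe_lt_one] using hξ)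
  simpa [FormalMultilinearSeries.ofScalars_apply_eq, ← one_div, ringChoose_eq_invSqrtCoeff,
    Real.sqrt_eq_rpow, mul_comm] using this
lemma intervalIntegrable_div_pow_succ_div {a b : ℝ} (hab : (0 : ℝ) ∉ uIcc a b) (c : ℝ) (n : ℕ) :
    IntervalIntegrable (fun x => (c / x) ^ (n + 1) / x) volume a b := by
  have hx : ∀ x ∈ uIcc a b, x ≠ 0 := fun x hx h => hab (h ▸ hx)
  exact (((continuousOn_const.div continuousOn_id hx).pow _).div continuousOn_id hx).intervalIntegrable

lemma integral_div_pow_succ_div {a b : ℝ} (hab : (0 : ℝ) ∉ uIcc a b) (c : ℝ) (n : ℕ) :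
    ∫ x in a..b, (c / x) ^ (n + 1) / x = ((c / a) ^ (n + 1) - (c / b) ^ (n + 1)) / (n + 1) := by
  have hx : ∀ x ∈ uIcc a b, x ≠ 0 := fun x hx h => hab (h ▸ hx)
  have hderiv : ∀ x ∈ uIcc a b,
      HasDerivAt (fun x => -(c / x) ^ (n + 1) / (n + 1)) ((c / x) ^ (n + 1) / x) x := by
    intro x hxab
    have hx0 := hx x hxab
    refine ((((hasDerivAt_const x c).div (hasDerivAt_id x) hx0).pow (n + 1)).neg.div_const
      ((n : ℝ) + 1)).congr_deriv ?_
    simp only [Pi.div_apply, id, Nat.add_sub_cancel, Nat.cast_succ, div_pow]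
    field_simp
    ring
  rw [intervalIntegral.integral_eq_sub_of_hasDerivAt hderiv
    (intervalIntegrable_div_pow_succ_div hab c n)]
  ring

lemma hasSum_intervalIntegral_of_nonneg {a b : ℝ} (hab : a ≤ b) {F : ℕ → ℝ → ℝ} {f : ℝ → ℝ}
    (hF_int : ∀ k, IntervalIntegrable (F k) volume a b)
    (hF_nonneg : ∀ k, ∀ x ∈ Ioc a b, 0 ≤ F k x)
    (hF_sum : ∀ x ∈ Ioc a b, HasSum (fun k => F k x) (f x))
    (h_summable : Summable fun k => ∫ x in a..b, F k x) :
    HasSum (fun k => ∫ x in a..b, F k x) (∫ x in a..b, f x) := by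
  simp only [intervalIntegral.integral_of_le hab] at h_summable ⊢
  have h_norm : ∀ k, ∫ x in Ioc a b, ‖F k x‖ = ∫ x in Ioc a b, F k x := fun k =>
    setIntegral_congr_fun measurableSet_Ioc fun x hx => norm_of_nonneg (hF_nonneg k x hx)
  rw [setIntegral_congr_fun measurableSet_Ioc fun x hx => (hF_sum x hx).tsum_eq.symm]
  exact hasSum_integral_of_summable_integral_norm
    (fun k => (intervalIntegrable_iff_integrableOn_Ioc_of_le hab).1 (hF_int k))
    (by simpa only [h_norm] using h_summable)

lemma hasSum_invSqrtCoeff_succ_mul_pow {ξ : ℝ} (hξ : |ξ| < 1) :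
    HasSum (fun k => invSqrtCoeff (k + 1) * ξ ^ (k + 1)) (1 / √(1 - ξ) - 1) := by
  simpa using (hasSum_nat_add_iff' 1).2 (hasSum_invSqrtCoeff_mul_pow hξ)

lemma summable_invSqrtCoeff_succ_div_mul_one_sub_pow {q : ℝ} (hq0 : 0 ≤ q) (hq1 : q ≤ 1) :
    Summable fun k : ℕ => invSqrtCoeff (k + 1) / (k + 1) * (1 - q ^ (k + 1)) := by
  have hcoeff (k : ℕ) : 0 ≤ invSqrtCoeff (k + 1) / (k + 1) := by
    have := invSqrtCoeff_nonneg (k + 1)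
    positivity
  refine summable_invSqrtCoeff_div_succ.of_nonneg_of_le
    (fun k => mul_nonneg (hcoeff k) (sub_nonneg.2 (pow_le_one₀ hq0 hq1))) (fun k => ?_)
  calc invSqrtCoeff (k + 1) / (k + 1) * (1 - q ^ (k + 1))
      ≤ invSqrtCoeff (k + 1) / (k + 1) :=
        mul_le_of_le_one_right (hcoeff k) (sub_le_self _ (pow_nonneg hq0 _))
    _ ≤ invSqrtCoeff k / (k + 1) := by gcongr; exact invSqrtCoeff_succ_le k

/-- Series representation of the Schwarzschild isotropic-map integral:
Σ_{k≥1} (C_k/k)(1 − (r_g/r)^k) = ∫_{r_g}^{r} (1/√(1 − r_g/x) − 1)/x dx,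
where C_k = (2k choose k)/4^k. -/
theorem schwarzschild_isotropic_integral_series (r_g r : ℝ) (h0 : 0 < r_g) (h : r_g < r) :
    HasSum (fun k : ℕ =>
        ((Nat.choose (2 * (k + 1)) (k + 1) : ℝ) / 4 ^ (k + 1)) / (k + 1)
          * (1 - (r_g / r) ^ (k + 1)))
      (∫ x in r_g..r, (1 / Real.sqrt (1 - r_g / x) - 1) / x) := by
  have h0_notMem : (0 : ℝ) ∉ uIcc r_g r := by
    rw [uIcc_of_le h.le]
    exact fun hx => h0.not_ge hx.1
  have hterm_integral (k : ℕ) :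
      ∫ x in r_g..r, invSqrtCoeff (k + 1) * ((r_g / x) ^ (k + 1) / x)
        = invSqrtCoeff (k + 1) / (k + 1) * (1 - (r_g / r) ^ (k + 1)) := by
    rw [intervalIntegral.integral_const_mul, integral_div_pow_succ_div h0_notMem, div_self h0.ne',
      one_pow]
    ring
  show HasSum (fun k : ℕ => invSqrtCoeff (k + 1) / (k + 1) * (1 - (r_g / r) ^ (k + 1))) _
  simp only [← hterm_integral]
  refine hasSum_intervalIntegral_of_nonneg h.le
    (fun k => (intervalIntegrable_div_pow_succ_div h0_notMem r_g k).const_mul _)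
    (fun k x hx => ?_) (fun x hx => ?_) ?_
  · have := invSqrtCoeff_nonneg (k + 1)
    have := h0.trans hx.1
    positivity
  · have hx0 : 0 < x := h0.trans hx.1
    have hξ : |r_g / x| < 1 := by
      rw [abs_of_pos (by positivity), div_lt_one hx0]
      exact hx.1
    simpa only [mul_div_assoc] using (hasSum_invSqrtCoeff_succ_mul_pow hξ).div_const x
  · simpa only [hterm_integral] using summable_invSqrtCoeff_succ_div_mul_one_sub_pow
      (div_nonneg h0.le (h0.trans h).le) (div_le_one_of_le₀ h.le (h0.trans h).le)
end

section
/- Let Λ > 0 and let r₃ < 0 < r₂ < r₁ be real numbers. Define f(r) = −(Λ/(3r))·(r − r₁)·(r − r₂)·(r − r₃), the elliptic modulus k by k² = (−r₃·(r₁ − r₂))/(r₁·(r₂ − r₃)), the amplitude φ(r) = arcsin(√(r₁·(r − r₂)/(r·(r₁ − r₂)))), the constant C_Λ = 2·√(3/Λ)/√(r₁·(r₂ − r₃)), and F(φ) = ∫_0^φ (1 − k²·sin²θ)^{−1/2} dθ. Then for every r ∈ (r₂, r₁), ∫_{r₂}^{r} dx/(x·√(f(x))) = C_Λ·F(φ(r)).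 -/
/-!
Substituting `s = sin² θ` gives `d F(arcsin √s) = ds / (2 √(s (1 - s) (1 - k² s)))`. For
`s(r) = r₁ (r - r₂) / (r (r₁ - r₂))` the cubic factors as
`4 s (1 - s) (1 - k² s) = C_Λ² r² s'(r)² f(r)`, so `C_Λ F(φ(r))` is an antiderivative of
`1 / (r √f(r))` on `(r₂, r₁)` that vanishes at `r₂`. The integrand blows up at `r₂`, but it is
nonnegative with an antiderivative continuous on `[r₂, r]`, hence integrable, and the fundamental
theorem of calculus applies.
-/

open MeasureTheory Set Real

/-- The incomplete elliptic integral of the first kind, in terms of the parameter `m = k²`. -/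
noncomputable def ellipticF (m φ : ℝ) : ℝ :=
  ∫ θ in (0:ℝ)..φ, 1 / √(1 - m * sin θ ^ 2)

section EllipticF

variable {m : ℝ}

@[simp]
theorem ellipticF_zero : ellipticF m 0 = 0 := by
  simp [ellipticF]

theorem one_sub_mul_sin_sq_pos (hm : m < 1) (θ : ℝ) : 0 < 1 - m * sin θ ^ 2 := by
  rcases le_total m 0 with h | h
  · nlinarith [sq_nonneg (sin θ)]
  · nlinarith [sin_sq_le_one θ]

theorem hasDerivAt_ellipticF (hm : m < 1) (φ : ℝ) :
    HasDerivAt (ellipticF m) (1 / √(1 - m * sin φ ^ 2)) φ := by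
  have hcont : Continuous fun θ => 1 / √(1 - m * sin θ ^ 2) :=
    continuous_const.div (by fun_prop) fun θ => (sqrt_pos.2 (one_sub_mul_sin_sq_pos hm θ)).ne'
  exact (hcont.integral_hasStrictDerivAt 0 φ).hasDerivAt

theorem continuous_ellipticF (hm : m < 1) : Continuous (ellipticF m) :=
  continuous_iff_continuousAt.2 fun φ => (hasDerivAt_ellipticF hm φ).continuousAt

theorem HasDerivAt.arcsin_sqrt {u : ℝ → ℝ} {u' x : ℝ} (hu : HasDerivAt u u' x)
    (h0 : 0 < u x) (h1 : u x < 1) :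
    HasDerivAt (fun y => arcsin √(u y)) (u' / (2 * √(u x * (1 - u x)))) x := by
  have hs1 : √(u x) < 1 := by simpa using sqrt_lt_sqrt h0.le h1
  have := (hasDerivAt_arcsin (by linarith [sqrt_nonneg (u x)]) hs1.ne).comp x
    ((hasDerivAt_sqrt h0.ne').comp x hu)
  refine this.congr_deriv ?_
  rw [sq_sqrt h0.le, sqrt_mul h0.le]
  field_simp

theorem HasDerivAt.ellipticF_arcsin_sqrt (hm : m < 1) {u : ℝ → ℝ} {u' x : ℝ}
    (hu : HasDerivAt u u' x) (h0 : 0 < u x) (h1 : u x < 1) :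
    HasDerivAt (fun y => ellipticF m (arcsin √(u y)))
      (u' / (2 * √(u x * (1 - u x) * (1 - m * u x)))) x := by
  have hsin : Real.sin (arcsin √(u x)) ^ 2 = u x := by
    rw [sin_arcsin (by linarith [sqrt_nonneg (u x)]) (by simpa using sqrt_le_sqrt h1.le),
      sq_sqrt h0.le]
  have := (hasDerivAt_ellipticF hm _).comp x (hu.arcsin_sqrt h0 h1)
  refine this.congr_deriv ?_
  rw [hsin, sqrt_mul (mul_pos h0 (sub_pos.2 h1)).le]
  field_simp

end EllipticF

section Kottler

variable {Λ r₁ r₂ r₃ x : ℝ}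

noncomputable def kottlerMetricFun (Λ r₁ r₂ r₃ r : ℝ) : ℝ :=
  -(Λ / (3 * r)) * (r - r₁) * (r - r₂) * (r - r₃)

/-- `sin² φ(r)` for the amplitude `φ` of the elliptic form. -/
noncomputable def sinSqAmplitude (r₁ r₂ r : ℝ) : ℝ :=
  r₁ * (r - r₂) / (r * (r₁ - r₂))

theorem kottlerMetricFun_eq (Λ r₁ r₂ r₃ x : ℝ) :
    kottlerMetricFun Λ r₁ r₂ r₃ x = Λ / (3 * x) * ((r₁ - x) * (x - r₂) * (x - r₃)) := by
  unfold kottlerMetricFun; ring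

theorem kottlerMetricFun_pos (hΛ : 0 < Λ) (h3 : r₃ < 0) (h2 : 0 < r₂) (hx : x ∈ Ioo r₂ r₁) :
    0 < kottlerMetricFun Λ r₁ r₂ r₃ x := by
  obtain ⟨hx2, hx1⟩ := hx
  have : 0 < x := h2.trans hx2
  rw [kottlerMetricFun_eq]
  have := mul_pos (mul_pos (sub_pos.2 hx1) (sub_pos.2 hx2)) (by linarith : 0 < x - r₃)
  positivity

theorem sinSqAmplitude_mem_Ioo (h2 : 0 < r₂) (hx : x ∈ Ioo r₂ r₁) :
    sinSqAmplitude r₁ r₂ x ∈ Ioo 0 1 := by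
  obtain ⟨hx2, hx1⟩ := hx
  have hd : 0 < x * (r₁ - r₂) := mul_pos (h2.trans hx2) (by linarith)
  refine ⟨div_pos (mul_pos (by linarith) (by linarith)) hd, (div_lt_one hd).2 ?_⟩
  nlinarith

theorem hasDerivAt_sinSqAmplitude (hx : x ≠ 0) (h : r₁ ≠ r₂) :
    HasDerivAt (sinSqAmplitude r₁ r₂) (r₁ * r₂ / (x ^ 2 * (r₁ - r₂))) x := by
  have hd : x * (r₁ - r₂) ≠ 0 := mul_ne_zero hx (sub_ne_zero.2 h)
  have := (((hasDerivAt_id x).sub_const r₂).const_mul r₁).div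
    ((hasDerivAt_id x).mul_const (r₁ - r₂)) hd
  refine this.congr_deriv ?_
  simp only [id]
  field_simp
  ring

theorem continuousOn_sinSqAmplitude (h2 : 0 < r₂) (h : r₁ ≠ r₂) :
    ContinuousOn (sinSqAmplitude r₁ r₂) (Ici r₂) :=
  ContinuousOn.div (by fun_prop) (by fun_prop) fun y hy =>
    mul_ne_zero (h2.trans_le hy).ne' (sub_ne_zero.2 h)

theorem kottler_elliptic_substitution (hΛ : 0 < Λ) (h3 : r₃ < 0) (h2 : 0 < r₂)
    (hx : x ∈ Ioo r₂ r₁) {k2 CΛ : ℝ} (hk2 : k2 = -r₃ * (r₁ - r₂) / (r₁ * (r₂ - r₃)))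
    (hCΛ : CΛ = 2 * √(3 / Λ) / √(r₁ * (r₂ - r₃))) :
    CΛ * (r₁ * r₂ / (x ^ 2 * (r₁ - r₂)) /
        (2 * √(sinSqAmplitude r₁ r₂ x * (1 - sinSqAmplitude r₁ r₂ x) *
          (1 - k2 * sinSqAmplitude r₁ r₂ x)))) =
      1 / (x * √(kottlerMetricFun Λ r₁ r₂ r₃ x)) := by
  -- both sides are positive, so compare squares; `1 - s` and `1 - k² s` factor linearly in `x`
  have hf := kottlerMetricFun_pos hΛ h3 h2 hx
  obtain ⟨hx2, hx1⟩ := hx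
  have hx0 : 0 < x := h2.trans hx2
  have h12 : 0 < r₁ - r₂ := by linarith
  have h23 : 0 < r₂ - r₃ := by linarith
  have hr₁ : 0 < r₁ := by linarith
  have hr₁x : 0 < r₁ - x := by linarith
  have hxr₃ : 0 < x - r₃ := by linarith
  have hs : 0 < sinSqAmplitude r₁ r₂ x := (sinSqAmplitude_mem_Ioo h2 ⟨hx2, hx1⟩).1
  have hs1 : 1 - sinSqAmplitude r₁ r₂ x = r₂ * (r₁ - x) / (x * (r₁ - r₂)) := by
    unfold sinSqAmplitude; field_simp; ring
  have hks : 1 - k2 * sinSqAmplitude r₁ r₂ x = r₂ * (x - r₃) / (x * (r₂ - r₃)) := by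
    unfold sinSqAmplitude; subst hk2; field_simp; ring
  have hP : 0 ≤ sinSqAmplitude r₁ r₂ x * (1 - sinSqAmplitude r₁ r₂ x) *
      (1 - k2 * sinSqAmplitude r₁ r₂ x) := by
    rw [hs1, hks]
    positivity
  have hC : 0 ≤ CΛ := by rw [hCΛ]; positivity
  have hC2 : CΛ ^ 2 = 4 * (3 / Λ) / (r₁ * (r₂ - r₃)) := by
    rw [hCΛ, div_pow, mul_pow, sq_sqrt (by positivity), sq_sqrt (by positivity)]
    norm_num
  rw [← sq_eq_sq₀ (by positivity) (by positivity)]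
  simp only [mul_pow, div_pow, one_pow, sq_sqrt hP, sq_sqrt hf.le]
  rw [hC2, hs1, hks, kottlerMetricFun_eq]
  unfold sinSqAmplitude
  field_simp
  ring

theorem kottler_modulusSq_lt_one (h3 : r₃ < 0) (h2 : 0 < r₂) (h21 : r₂ < r₁) :
    -r₃ * (r₁ - r₂) / (r₁ * (r₂ - r₃)) < 1 := by
  rw [div_lt_one (mul_pos (by linarith) (by linarith))]
  nlinarith

theorem hasDerivAt_kottler_ellipticF (hΛ : 0 < Λ) (h3 : r₃ < 0) (h2 : 0 < r₂)
    (hx : x ∈ Ioo r₂ r₁) {k2 CΛ : ℝ} (hk2 : k2 = -r₃ * (r₁ - r₂) / (r₁ * (r₂ - r₃)))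
    (hCΛ : CΛ = 2 * √(3 / Λ) / √(r₁ * (r₂ - r₃))) :
    HasDerivAt (fun y => CΛ * ellipticF k2 (arcsin √(sinSqAmplitude r₁ r₂ y)))
      (1 / (x * √(kottlerMetricFun Λ r₁ r₂ r₃ x))) x := by
  have hk : k2 < 1 := hk2 ▸ kottler_modulusSq_lt_one h3 h2 (hx.1.trans hx.2)
  obtain ⟨hs0, hs1⟩ := sinSqAmplitude_mem_Ioo h2 hx
  have hs' := hasDerivAt_sinSqAmplitude (h2.trans hx.1).ne' (hx.1.trans hx.2).ne'
  rw [← kottler_elliptic_substitution hΛ h3 h2 hx hk2 hCΛ]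
  exact (hs'.ellipticF_arcsin_sqrt hk hs0 hs1).const_mul CΛ

end Kottler

/-- Köttler (Schwarzschild–de Sitter) isotropic-map integral in elliptic form:
for r in the static region (r₂, r₁), ∫_{r₂}^{r} dx/(x√(f x)) = C_Λ F(φ(r)). -/
theorem kottler_isotropic_integral_elliptic
    (Λ r₁ r₂ r₃ : ℝ) (hΛ : 0 < Λ) (h3 : r₃ < 0) (h2 : 0 < r₂) (h21 : r₂ < r₁)
    (f : ℝ → ℝ)
    (hf : ∀ r, f r = -(Λ / (3 * r)) * (r - r₁) * (r - r₂) * (r - r₃))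
    (k2 : ℝ) (hk2 : k2 = (-r₃ * (r₁ - r₂)) / (r₁ * (r₂ - r₃)))
    (φ : ℝ → ℝ)
    (hφ : ∀ r, φ r = Real.arcsin (Real.sqrt (r₁ * (r - r₂) / (r * (r₁ - r₂)))))
    (CΛ : ℝ) (hCΛ : CΛ = 2 * Real.sqrt (3 / Λ) / Real.sqrt (r₁ * (r₂ - r₃)))
    (F : ℝ → ℝ)
    (hF : ∀ φ₀ : ℝ, F φ₀ = ∫ θ in (0:ℝ)..φ₀, 1 / Real.sqrt (1 - k2 * Real.sin θ ^ 2)) :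
    ∀ r ∈ Set.Ioo r₂ r₁,
      (∫ x in r₂..r, 1 / (x * Real.sqrt (f x))) = CΛ * F (φ r) := by
  intro r hr
  obtain rfl : f = kottlerMetricFun Λ r₁ r₂ r₃ := funext hf
  obtain rfl : φ = fun y => arcsin √(sinSqAmplitude r₁ r₂ y) := funext hφ
  obtain rfl : F = ellipticF k2 := funext hF
  have hk : k2 < 1 := hk2 ▸ kottler_modulusSq_lt_one h3 h2 h21
  have hderiv (x : ℝ) (hx : x ∈ Ioo r₂ r) := hasDerivAt_kottler_ellipticF hΛ h3 h2
    ⟨hx.1, hx.2.trans hr.2⟩ hk2 hCΛ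
  have hcont : ContinuousOn (fun y => CΛ * ellipticF k2 (arcsin √(sinSqAmplitude r₁ r₂ y)))
      (Icc r₂ r) :=
    (continuous_const.mul (continuous_ellipticF hk)).comp_continuousOn
      ((continuous_arcsin.comp continuous_sqrt).comp_continuousOn
        ((continuousOn_sinSqAmplitude h2 h21.ne').mono Icc_subset_Ici_self))
  have hint :
      IntervalIntegrable (fun x => 1 / (x * √(kottlerMetricFun Λ r₁ r₂ r₃ x))) volume r₂ r :=
    (intervalIntegrable_iff_integrableOn_Ioc_of_le hr.1.le).2 <|
      intervalIntegral.integrableOn_deriv_of_nonneg hcont hderiv fun x hx => by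
        have := h2.trans hx.1
        positivity
  rw [intervalIntegral.integral_eq_sub_of_hasDerivAt_of_le hr.1.le hcont hderiv hint]
  simp [sinSqAmplitude]
end
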